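/- Let F ∈ ℂ[x,y,z] be a homogeneous polynomial of total degree δ ≥ 1 such that the three partial derivatives ∂F/∂x, ∂F/∂y, ∂F/∂z have no common zero in ℂ³ \ {0} (i.e. the projective plane curve F = 0 is nonsingular). Then F is irreducible in ℂ[x,y,z]. -/

import Mathlib

/-!
If `F = a * b` with `a`, `b` non-units, then `a` and `b` are forms of positive degrees `d`, `e`,
and two such forms in three variables have a common zero `x ≠ 0`, where the gradient
`a ∇b + b ∇a` of `F` vanishes.

The common zero comes from a dimension count. Let `S n` be the space of forms of degree `n`, of
dimension `(n + 1)(n + 2)/2`. If `0` were the only common zero, the Nullstellensatz would put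
`S (c + d + e)` into the ideal `(a, b)` for large `c`, so `(A, B) ↦ A a + B b` would map
`S (c + e) × S (c + d)` onto it, with kernel containing `{(C b, -C a) | C ∈ S c}`. This forces
`dim S (c + d + e) + dim S c ≤ dim S (c + e) + dim S (c + d)`, but the left side exceeds the
right by `d e`.
-/

open MvPolynomial

theorem Nat.two_mul_multichoose_three (n : ℕ) : 2 * Nat.multichoose 3 n = (n + 1) * (n + 2) := by
  rw [Nat.multichoose_eq, show 3 + n - 1 = n + 2 by omega, Nat.choose_symm_add,
    Nat.choose_two_right, show n + 2 - 1 = n + 1 from rfl, mul_comm (n + 2),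
    Nat.mul_div_cancel' (Nat.even_mul_succ_self (n + 1)).two_dvd]

theorem Nat.multichoose_three_add_lt {c d e : ℕ} (hd : 1 ≤ d) (he : 1 ≤ e) :
    Nat.multichoose 3 (c + e) + Nat.multichoose 3 (c + d) <
      Nat.multichoose 3 (c + d + e) + Nat.multichoose 3 c := by
  have := Nat.two_mul_multichoose_three (c + e)
  have := Nat.two_mul_multichoose_three (c + d)
  have := Nat.two_mul_multichoose_three (c + d + e)
  have := Nat.two_mul_multichoose_three c
  nlinarith [Nat.mul_le_mul hd he]

theorem Submodule.finrank_add_finrank_le_of_mul_add_mul {K A : Type*} [Field K] [CommRing A]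
    [Algebra K A] {g h : A} (hh : IsRightRegular h) {T U V W : Submodule K A}
    [FiniteDimensional K U] [FiniteDimensional K V]
    (hT : ∀ t ∈ T, ∃ a ∈ U, ∃ b ∈ V, a * g + b * h = t)
    (hWU : ∀ c ∈ W, c * h ∈ U) (hWV : ∀ c ∈ W, c * g ∈ V) :
    Module.finrank K T + Module.finrank K W ≤ Module.finrank K U + Module.finrank K V := by
  let f : U × V →ₗ[K] A :=
    (LinearMap.mulRight K g ∘ₗ U.subtype).coprod (LinearMap.mulRight K h ∘ₗ V.subtype)
  let ψ : W →ₗ[K] U × V :=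
    ((LinearMap.mulRight K h ∘ₗ W.subtype).codRestrict U fun c => hWU c c.2).prod
      ((-(LinearMap.mulRight K g ∘ₗ W.subtype)).codRestrict V fun c => V.neg_mem (hWV c c.2))
  have hTf : T ≤ LinearMap.range f := fun t ht => by
    obtain ⟨a, ha, b, hb, rfl⟩ := hT t ht
    exact ⟨(⟨a, ha⟩, ⟨b, hb⟩), rfl⟩
  have hψ : Function.Injective ψ := fun c c' hcc' =>
    Subtype.ext (hh (congrArg (fun x => ((x.1 : U) : A)) hcc'))
  have hψf : LinearMap.range ψ ≤ LinearMap.ker f := by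
    rintro _ ⟨c, rfl⟩
    change (c : A) * h * g + -((c : A) * g) * h = 0
    ring
  calc Module.finrank K T + Module.finrank K W
      ≤ Module.finrank K (LinearMap.range f) + Module.finrank K (LinearMap.ker f) :=
        add_le_add (Submodule.finrank_mono hTf)
          ((LinearMap.finrank_range_of_inj hψ).symm.trans_le (Submodule.finrank_mono hψf))
    _ = Module.finrank K U + Module.finrank K V := by
        rw [LinearMap.finrank_range_add_finrank_ker, Module.finrank_prod]

namespace MvPolynomial

variable {σ R : Type*}

section CommSemiring

variable [CommSemiring R]

attribute [local instance] MvPolynomial.gradedAlgebra in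
theorem homogeneousComponent_mul_of_isHomogeneous {p q : MvPolynomial σ R} {e n : ℕ}
    (hq : q.IsHomogeneous e) (hen : e ≤ n) :
    homogeneousComponent n (p * q) = homogeneousComponent (n - e) p * q := by
  rw [← decomposition.decompose'_apply, ← decomposition.decompose'_apply]
  exact DirectSum.coe_decompose_mul_of_right_mem_of_le (homogeneousSubmodule σ R) hq hen

theorem homogeneousComponent_degree_ne_zero {p : MvPolynomial σ R} {u : σ →₀ ℕ}
    (hu : u ∈ p.support) : homogeneousComponent u.degree p ≠ 0 := by
  refine ne_zero_iff.mpr ⟨u, ?_⟩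
  rwa [coeff_homogeneousComponent, if_pos rfl, ← mem_support_iff]

theorem homogeneousComponent_add_mul {p q : MvPolynomial σ R} {k l : ℕ}
    (h : ∀ u ∈ p.support, ∀ v ∈ q.support, u.degree + v.degree = k + l → u.degree = k) :
    homogeneousComponent (k + l) (p * q) =
      homogeneousComponent k p * homogeneousComponent l q := by
  classical
  ext d
  rw [coeff_homogeneousComponent]
  split_ifs with hd
  · rw [coeff_mul, coeff_mul]
    refine Finset.sum_congr rfl fun ⟨u, v⟩ huv => ?_
    dsimp only at huv ⊢
    have hsum : u.degree + v.degree = k + l := by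
      rw [← map_add, Finset.HasAntidiagonal.mem_antidiagonal.mp huv, hd]
    rw [coeff_homogeneousComponent, coeff_homogeneousComponent]
    by_cases hu : u ∈ p.support
    · by_cases hv : v ∈ q.support
      · have := h u hu v hv hsum
        rw [if_pos this, if_pos (by omega)]
      · simp [notMem_support_iff.mp hv]
    · simp [notMem_support_iff.mp hu]
  · exact (((homogeneousComponent_isHomogeneous k p).mul
      (homogeneousComponent_isHomogeneous l q)).coeff_eq_zero hd).symm

theorem isHomogeneous_of_forall_degree_eq {p : MvPolynomial σ R} {n : ℕ}
    (h : ∀ u ∈ p.support, u.degree = n) : p.IsHomogeneous n := fun u hu => by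
  simpa [Finsupp.degree_eq_weight_one, Pi.one_def] using h u (mem_support_iff.mpr hu)

theorem IsHomogeneous.exists_isHomogeneous_of_mem_span_pair {g h p : MvPolynomial σ R}
    {d e m : ℕ} (hg : g.IsHomogeneous d) (hh : h.IsHomogeneous e) (hp : p.IsHomogeneous m)
    (hdm : d ≤ m) (hem : e ≤ m) (hmem : p ∈ Ideal.span {g, h}) :
    ∃ a b : MvPolynomial σ R, a.IsHomogeneous (m - d) ∧ b.IsHomogeneous (m - e) ∧
      a * g + b * h = p := by
  obtain ⟨a, b, rfl⟩ := Ideal.mem_span_pair.mp hmem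
  refine ⟨homogeneousComponent (m - d) a, homogeneousComponent (m - e) b,
    homogeneousComponent_isHomogeneous _ _, homogeneousComponent_isHomogeneous _ _, ?_⟩
  rw [← homogeneousComponent_mul_of_isHomogeneous hg hdm,
    ← homogeneousComponent_mul_of_isHomogeneous hh hem, ← map_add,
    homogeneousComponent_eq_self hp]

instance finite_homogeneousSubmodule [Finite σ] (n : ℕ) :
    Module.Finite R (homogeneousSubmodule σ R n) :=
  Module.Finite.iff_fg.mpr (homogeneousSubmodule_fg σ R n)

theorem finrank_homogeneousSubmodule [Fintype σ] [StrongRankCondition R] (n : ℕ) :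
    Module.finrank R (homogeneousSubmodule σ R n) = (Fintype.card σ).multichoose n := by
  classical
  have hdeg : {d : σ →₀ ℕ | d.degree = n} =
      ↑(Finset.univ.finsuppAntidiag n : Finset (σ →₀ ℕ)) := by
    ext d
    simp [Finset.mem_finsuppAntidiag, Finsupp.degree_eq_sum]
  rw [homogeneousSubmodule_eq_finsupp_supported, hdeg,
    (AddMonoidAlgebra.supportedEquivFinsupp _).finrank_eq, Module.finrank_finsupp_self]
  simp [Finset.card_finsuppAntidiag_nat_eq_multichoose]

end CommSemiring

section Domain

variable [CommRing R] [IsDomain R]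

theorem IsHomogeneous.degree_add_eq_of_homogeneousComponent_mul {p q : MvPolynomial σ R}
    {n : ℕ} (hpq : (p * q).IsHomogeneous n) {u v : σ →₀ ℕ} (hu : u ∈ p.support)
    (hv : v ∈ q.support)
    (h : homogeneousComponent (u.degree + v.degree) (p * q) =
      homogeneousComponent u.degree p * homogeneousComponent v.degree q) :
    u.degree + v.degree = n := by
  by_contra hne
  rw [homogeneousComponent_of_mem hpq, if_neg hne] at h
  exact mul_ne_zero (homogeneousComponent_degree_ne_zero hu)
    (homogeneousComponent_degree_ne_zero hv) h.symm

/-- The lowest and the highest homogeneous components of `p * q` are products of those of `p`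
and `q`, so both have degree `n`. -/
theorem IsHomogeneous.exists_of_mul {p q : MvPolynomial σ R} {n : ℕ}
    (hpq : (p * q).IsHomogeneous n) (hp : p ≠ 0) (hq : q ≠ 0) :
    ∃ i j, p.IsHomogeneous i ∧ q.IsHomogeneous j ∧ i + j = n := by
  have hp' := support_nonempty.mpr hp
  have hq' := support_nonempty.mpr hq
  obtain ⟨u₀, hu₀, hu₀min⟩ := p.support.exists_min_image Finsupp.degree hp'
  obtain ⟨v₀, hv₀, hv₀min⟩ := q.support.exists_min_image Finsupp.degree hq'
  obtain ⟨u₁, hu₁, hu₁max⟩ := p.support.exists_max_image Finsupp.degree hp'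
  obtain ⟨v₁, hv₁, hv₁max⟩ := q.support.exists_max_image Finsupp.degree hq'
  have hlow : u₀.degree + v₀.degree = n :=
    hpq.degree_add_eq_of_homogeneousComponent_mul hu₀ hv₀ <| homogeneousComponent_add_mul
      fun u hu v hv _ => by have := hu₀min u hu; have := hv₀min v hv; omega
  have hhigh : u₁.degree + v₁.degree = n :=
    hpq.degree_add_eq_of_homogeneousComponent_mul hu₁ hv₁ <| homogeneousComponent_add_mul
      fun u hu v hv _ => by have := hu₁max u hu; have := hv₁max v hv; omega
  have := hu₀min u₁ hu₁
  have := hv₀min v₁ hv₁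
  refine ⟨u₀.degree, v₀.degree, isHomogeneous_of_forall_degree_eq fun u hu => ?_,
    isHomogeneous_of_forall_degree_eq fun v hv => ?_, hlow⟩
  · have := hu₀min u hu; have := hu₁max u hu; omega
  · have := hv₀min v hv; have := hv₁max v hv; omega

end Domain

section Field

variable {K : Type*} [Field K]

theorem IsHomogeneous.one_le_of_not_isUnit {p : MvPolynomial σ K} {n : ℕ}
    (hp : p.IsHomogeneous n) (hp0 : p ≠ 0) (hu : ¬IsUnit p) : 1 ≤ n := by
  refine Nat.one_le_iff_ne_zero.mpr fun hn => hu ?_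
  have hC := totalDegree_eq_zero_iff_eq_C.mp ((hn ▸ hp).totalDegree hp0)
  refine isUnit_iff_eq_C_of_isReduced.mpr ⟨_, isUnit_iff_ne_zero.mpr fun h0 => hp0 ?_, hC⟩
  rw [hC, h0, C_0]

theorem exists_forall_isHomogeneous_mem_of_zeroLocus_subset [IsAlgClosed K] [Finite σ]
    {I : Ideal (MvPolynomial σ K)} (hI : zeroLocus K I ⊆ {0}) :
    ∃ N, ∀ n ≥ N, ∀ p : MvPolynomial σ K, p.IsHomogeneous n → p ∈ I := by
  have hX : Ideal.span (Set.range X) ≤ I.radical := by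
    rw [Ideal.span_le, ← vanishingIdeal_zeroLocus_eq_radical (K := K)]
    rintro _ ⟨i, rfl⟩ x hx
    rw [Set.mem_singleton_iff.mp (hI hx)]
    simp
  obtain ⟨N, hN⟩ := Ideal.exists_pow_le_of_le_radical_of_fg hX
    (Submodule.fg_span (Set.finite_range X))
  refine ⟨N, fun n hn p hp => hN (Ideal.pow_le_pow_right hn ?_)⟩
  exact (Ideal.mem_span_pow_iff_exists_isHomogeneous X p).mpr
    ⟨map C p, hp.map C, by rw [eval_map, eval₂_eta]⟩

theorem exists_ne_zero_eval_eq_zero_of_isHomogeneous [IsAlgClosed K]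
    {g h : MvPolynomial (Fin 3) K} {d e : ℕ} (hg : g.IsHomogeneous d) (hh : h.IsHomogeneous e)
    (hd : 1 ≤ d) (he : 1 ≤ e) (hh0 : h ≠ 0) :
    ∃ x : Fin 3 → K, x ≠ 0 ∧ eval x g = 0 ∧ eval x h = 0 := by
  by_contra! hno
  have hI : zeroLocus K (Ideal.span {g, h}) ⊆ {0} := fun x hx => by
    by_contra hx0
    exact hno x hx0 (by simpa using hx g (Ideal.subset_span (by simp)))
      (by simpa using hx h (Ideal.subset_span (by simp)))
  obtain ⟨c, hc⟩ := exists_forall_isHomogeneous_mem_of_zeroLocus_subset hI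
  have hdim := Submodule.finrank_add_finrank_le_of_mul_add_mul (IsRegular.of_ne_zero hh0).right
    (T := homogeneousSubmodule (Fin 3) K (c + d + e)) (U := homogeneousSubmodule _ K (c + e))
    (V := homogeneousSubmodule _ K (c + d)) (W := homogeneousSubmodule _ K c)
    (fun t ht => by
      obtain ⟨a, b, ha, hb, rfl⟩ := hg.exists_isHomogeneous_of_mem_span_pair hh ht
        (by omega) (by omega) (hc _ (by omega) t ht)
      exact ⟨a, by rwa [show c + e = c + d + e - d by omega], b,
        by rwa [show c + d = c + d + e - e by omega], rfl⟩)
    (fun _ hw => IsHomogeneous.mul hw hh) (fun _ hw => IsHomogeneous.mul hw hg)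
  simp only [finrank_homogeneousSubmodule, Fintype.card_fin] at hdim
  have := Nat.multichoose_three_add_lt (c := c) hd he
  omega

end Field

end MvPolynomial

theorem nonsingular_implies_irreducible_general (δ : ℕ)
    (F : MvPolynomial (Fin 3) ℂ) (hhom : F.IsHomogeneous δ)
    (hns : ∀ x : Fin 3 → ℂ, x ≠ 0 →
      ∃ i : Fin 3, MvPolynomial.eval x (MvPolynomial.pderiv i F) ≠ 0) :
    Irreducible F := by
  have hF : ∀ c, F ≠ C c := by
    rintro c rfl
    obtain ⟨i, hi⟩ := hns 1 one_ne_zero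
    simp at hi
  refine ⟨fun hu => ?_, fun a b hab => ?_⟩
  · obtain ⟨c, -, hc⟩ := isUnit_iff_eq_C_of_isReduced.mp hu
    exact hF c hc
  by_contra! hnu
  have ha0 : a ≠ 0 := by rintro rfl; exact hF 0 (by simp [hab])
  have hb0 : b ≠ 0 := by rintro rfl; exact hF 0 (by simp [hab])
  obtain ⟨i, j, ha, hb, -⟩ := (hab ▸ hhom).exists_of_mul ha0 hb0
  obtain ⟨x, hx0, hax, hbx⟩ := exists_ne_zero_eval_eq_zero_of_isHomogeneous ha hb
    (ha.one_le_of_not_isUnit ha0 hnu.1) (hb.one_le_of_not_isUnit hb0 hnu.2) hb0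
  obtain ⟨k, hk⟩ := hns x hx0
  exact hk (by simp [hab, Derivation.leibniz, hax, hbx])

/-- a homogeneous polynomial `F ∈ ℂ[x,y,z]` of degree `δ ≥ 1`
whose partial derivatives have no common zero in `ℂ³ \ {0}` (i.e. the projective
plane curve `F = 0` is nonsingular) is irreducible. -/
theorem nonsingular_implies_irreducible (δ : ℕ) (hδ : 1 ≤ δ)
    (F : MvPolynomial (Fin 3) ℂ) (hhom : F.IsHomogeneous δ)
    (hns : ∀ x : Fin 3 → ℂ, x ≠ 0 →
      ∃ i : Fin 3, MvPolynomial.eval x (MvPolynomial.pderiv i F) ≠ 0) :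
    Irreducible F :=
  nonsingular_implies_irreducible_general δ F hhom hns
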